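/- Let u be a regular form. Then u satisfies H_q(Φ u) + Ψ u + B(x^{-1} u (h_q u)) = 0 (Φ monic, Ψ, B polynomials) if and only if its formal Stieltjes series satisfies the q-Riccati equation (h_{q^{-1}}Φ)(z) · H_{q^{-1}}(S(u))(z) = B(z) S(u)(z) (h_{q^{-1}}S(u))(z) + C(z) S(u)(z) + D(z), where C(z) = −(H_{q^{-1}}Φ)(z) − qΨ(z) and D(z) = −{H_{q^{-1}}(uθ_0Φ)(z) + q(uθ_0Ψ)(z) + q((u (h_q u))(θ_0²B))(z)}. -/

import Mathlib

open Polynomial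

noncomputable section

namespace QLH

/-- A *form*: a linear functional on ℂ[x]. -/
abbrev PForm : Type := Polynomial ℂ →ₗ[ℂ] ℂ

private lemma divByMonic_add (d f g : Polynomial ℂ) (hd : d.Monic) :
    (f + g) /ₘ d = f /ₘ d + g /ₘ d := by
  apply mul_left_cancel₀ hd.ne_zero
  have h1 : d * (f /ₘ d) = f - f %ₘ d := by
    rw [Polynomial.modByMonic_eq_sub_mul_div f d]; ring
  have h2 : d * (g /ₘ d) = g - g %ₘ d := by
    rw [Polynomial.modByMonic_eq_sub_mul_div g d]; ring
  have h3 : d * ((f + g) /ₘ d) = (f + g) - (f + g) %ₘ d := by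
    rw [Polynomial.modByMonic_eq_sub_mul_div (f + g) d]; ring
  rw [mul_add, h1, h2, h3, Polynomial.add_modByMonic]
  ring

private lemma divByMonic_smul (d f : Polynomial ℂ) (a : ℂ) (hd : d.Monic) :
    (a • f) /ₘ d = a • (f /ₘ d) := by
  apply mul_left_cancel₀ hd.ne_zero
  have h1 : d * (f /ₘ d) = f - f %ₘ d := by
    rw [Polynomial.modByMonic_eq_sub_mul_div f d]; ring
  have h3 : d * ((a • f) /ₘ d) = (a • f) - (a • f) %ₘ d := by
    rw [Polynomial.modByMonic_eq_sub_mul_div (a • f) d]; ring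
  rw [h3, Polynomial.smul_modByMonic, mul_smul_comm, h1, smul_sub]

/-- `(h_a f)(x) = f (a x)`. -/
def hP (a : ℂ) : Polynomial ℂ →ₗ[ℂ] Polynomial ℂ :=
  (Polynomial.aeval (Polynomial.C a * Polynomial.X : Polynomial ℂ)).toLinearMap

/-- `(θ_c f)(x) = (f(x) - f(c))/(x - c)`. -/
def thetaP (c : ℂ) : Polynomial ℂ →ₗ[ℂ] Polynomial ℂ where
  toFun f := (f - C (f.eval c)) /ₘ (X - C c)
  map_add' f g := by
    try dsimp only
    have h : f + g - C ((f + g).eval c)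
        = (f - C (f.eval c)) + (g - C (g.eval c)) := by
      simp only [eval_add, C_add]; ring
    rw [h, divByMonic_add _ _ _ (monic_X_sub_C c)]
  map_smul' a f := by
    try dsimp only
    have h : a • f - C ((a • f).eval c) = a • (f - C (f.eval c)) := by
      simp only [eval_smul, smul_eq_mul, smul_sub, Polynomial.smul_C]
    rw [h, divByMonic_smul _ _ _ (monic_X_sub_C c)]
    rfl

/-- `(H_q f)(x) = (f(qx) - f(x))/((q-1)x)`. -/
def HqP (q : ℂ) : Polynomial ℂ →ₗ[ℂ] Polynomial ℂ :=
  (q - 1)⁻¹ • (thetaP 0 ∘ₗ (hP q - LinearMap.id))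

/-- `⟨h_a u, f⟩ = ⟨u, h_a f⟩`. -/
def hF (a : ℂ) (u : PForm) : PForm := u ∘ₗ hP a

/-- `⟨H_q u, f⟩ = -⟨u, H_q f⟩`. -/
def HqF (q : ℂ) (u : PForm) : PForm := -(u ∘ₗ HqP q)

/-- `⟨g u, f⟩ = ⟨u, g f⟩`. -/
def mF (g : Polynomial ℂ) (u : PForm) : PForm := u ∘ₗ LinearMap.mulLeft ℂ g

/-- `⟨(x - c)⁻¹ u, f⟩ = ⟨u, θ_c f⟩`. -/
def divF (c : ℂ) (u : PForm) : PForm := u ∘ₗ thetaP c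

/-- The Dirac form `δ_c`. -/
def deltaF (c : ℂ) : PForm := Polynomial.leval c

/-- Kernel used in the left product of a form by a polynomial. -/
def kern (u : PForm) (j : ℕ) : Polynomial ℂ :=
  ∑ i ∈ Finset.range (j + 1), C (u (X ^ (j - i))) * X ^ i

/-- The left product `f ↦ u f`, `(uf)(x) = ⟨u_ζ, (x f(x) - ζ f(ζ))/(x - ζ)⟩`. -/
def lmul (u : PForm) : Polynomial ℂ →ₗ[ℂ] Polynomial ℂ where
  toFun f := f.sum fun j a => a • kern u j
  map_add' f g :=
    Polynomial.sum_add_index f g _ (fun i => zero_smul ℂ _) fun i b₁ b₂ => add_smul b₁ b₂ _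
  map_smul' a f := by
    try dsimp only
    rw [Polynomial.sum_smul_index f a (fun j b => b • kern u j) fun i => zero_smul ℂ _]
    simp only [Polynomial.sum_def, mul_smul, ← Finset.smul_sum]
    rfl

/-- The Cauchy product of two forms: `⟨uv, f⟩ = ⟨u, v f⟩`. -/
def cF (u v : PForm) : PForm := u ∘ₗ lmul v

/-- The q-difference equation `H_q(Φu) + Ψu + B(x⁻¹ u (h_q u)) = 0`. -/
def LHeq (q : ℂ) (u : PForm) (Φ Ψ B : Polynomial ℂ) : Prop :=
  HqF q (mF Φ u) + mF Ψ u + mF B (divF 0 (cF u (hF q u))) = 0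

/-- A form is regular when it possesses a MOPS. -/
def IsRegular (u : PForm) : Prop :=
  ∃ P : ℕ → Polynomial ℂ, (∀ n, (P n).Monic) ∧ (∀ n, (P n).natDegree = n) ∧
    (∀ n, u (P n * P n) ≠ 0) ∧ ∀ m n, m ≠ n → u (P m * P n) = 0

/-- A regular form is q-semiclassical when it satisfies `H_q(Φu) + Ψu = 0`, `Φ` monic. -/
def IsSemiclassical (q : ℂ) (u : PForm) : Prop :=
  IsRegular u ∧ ∃ Φ Ψ : Polynomial ℂ, Φ.Monic ∧ HqF q (mF Φ u) + mF Ψ u = 0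

/-- A regular form is q-Laguerre–Hahn when it satisfies some equation `LHeq`. -/
def IsLaguerreHahn (q : ℂ) (u : PForm) : Prop :=
  IsRegular u ∧ ∃ Φ Ψ B : Polynomial ℂ, Φ.Monic ∧ LHeq q u Φ Ψ B

/-- `u` is of class `s`: `s` is the minimum of `max (deg Ψ - 1) (max (deg Φ) (deg B) - 2)`
over all q-difference equations `LHeq q u Φ Ψ B` (`Φ` monic) satisfied by `u`. -/
def HasClass (q : ℂ) (u : PForm) (s : ℕ) : Prop :=
  (∃ Φ Ψ B : Polynomial ℂ, Φ.Monic ∧ LHeq q u Φ Ψ B ∧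
      Φ.natDegree ≤ s + 2 ∧ B.natDegree ≤ s + 2 ∧ Ψ.natDegree ≤ s + 1) ∧
  ∀ t : ℕ, (∃ Φ Ψ B : Polynomial ℂ, Φ.Monic ∧ LHeq q u Φ Ψ B ∧
      Φ.natDegree ≤ t + 2 ∧ B.natDegree ≤ t + 2 ∧ Ψ.natDegree ≤ t + 1) → s ≤ t

/-- Formal Stieltjes series `S(u)(z) = -∑ (u)_n z^{-n-1}`, as a formal Laurent
series in the variable `T = z⁻¹`. -/
def Sf (u : PForm) : LaurentSeries ℂ :=
  HahnSeries.ofPowerSeries ℤ ℂ (PowerSeries.mk fun n => if n = 0 then 0 else -u (X ^ (n - 1)))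

/-- A polynomial `f(z)`, viewed as a formal Laurent series in `T = z⁻¹`. -/
def toLS (f : Polynomial ℂ) : LaurentSeries ℂ :=
  ∑ j ∈ Finset.range (f.natDegree + 1), HahnSeries.single (-(j : ℤ)) (f.coeff j)

/-- The Laurent series `z` (in the variable `T = z⁻¹`). -/
def zLS : LaurentSeries ℂ := HahnSeries.single (-1 : ℤ) 1

/-- `(h_a F)(z) = F(az)` on formal Laurent series in `T = z⁻¹`. -/
def hLS (a : ℂ) (F : LaurentSeries ℂ) : LaurentSeries ℂ where
  coeff := fun k => a ^ (-k) * F.coeff k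
  isPWO_support' := F.isPWO_support'.mono fun k hk => by
    simp only [Function.mem_support] at hk ⊢
    exact fun h => hk (by rw [h, mul_zero])

/-- `(H_q F)(z) = (F(qz) - F(z))/((q-1)z)` on formal Laurent series in `T = z⁻¹`. -/
def HqLS (q : ℂ) (F : LaurentSeries ℂ) : LaurentSeries ℂ :=
  HahnSeries.single (1 : ℤ) ((q - 1)⁻¹) * (hLS q F - F)

/-
The Stieltjes map `u ↦ S(u)` is linear and injective, since `S(u) = -z⁻¹ M(u)(z⁻¹)` with `M(u)`
the generating series of the moments. It turns each operation on forms into an explicit operation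
on Laurent series in `z⁻¹`:
  `S(g u) = g S(u) + u θ₀g`,   `S(x⁻¹ u) = z⁻¹ S(u)`,   `S(u v) = -z S(u) S(v)`,
  `S(h_a u) = a⁻¹ h_{a⁻¹} S(u)`,   `S(H_q u) = q⁻¹ H_{q⁻¹} S(u)`,
the third because `M(u v) = M(u) M(v)`. Applying `S` to the left-hand side of the q-difference
equation and expanding with the q-Leibniz rule `H_p(f F) = (h_p f) H_p F + (H_p f) F` gives exactly
`q⁻¹` times the difference of the two sides of the Riccati equation.
-/

lemma thetaP_zero_apply (f : ℂ[X]) : thetaP 0 f = f.divX := by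
  change (f - C (f.eval 0)) /ₘ (X - C 0) = f.divX
  rw [map_zero, sub_zero, ← coeff_zero_eq_eval_zero, ← eq_sub_of_add_eq (X_mul_divX_add f),
    mul_divByMonic_cancel_left _ monic_X]

lemma hP_apply (a : ℂ) (f : ℂ[X]) : hP a f = f.comp (C a * X) := rfl

lemma hP_X_pow (a : ℂ) (n : ℕ) : hP a (X ^ n) = a ^ n • X ^ n := by
  rw [hP_apply, X_pow_comp, mul_pow, ← C_pow, smul_eq_C_mul]

lemma coeff_zero_hP (a : ℂ) (f : ℂ[X]) : (hP a f).coeff 0 = f.coeff 0 := by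
  simp [hP_apply, coeff_zero_eq_eval_zero, eval_comp]

lemma divX_X_mul (f : ℂ[X]) : (X * f).divX = f := by
  ext n
  rw [coeff_divX, coeff_X_mul]

-- The instance `Algebra ℂ (LaurentSeries ℂ)` goes through `PowerSeries ℂ`, so this is not `rfl`.
lemma algebraMap_laurentSeries (c : ℂ) : algebraMap ℂ (LaurentSeries ℂ) c = HahnSeries.C c := by
  rw [HahnSeries.algebraMap_apply', PowerSeries.algebraMap_eq, HahnSeries.ofPowerSeries_C]

lemma C_inv_mul_C {a : ℂ} (ha : a ≠ 0) :
    HahnSeries.C a⁻¹ * HahnSeries.C a = (1 : LaurentSeries ℂ) := by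
  rw [← map_mul, inv_mul_cancel₀ ha, map_one]

lemma toLS_eq_aeval (f : ℂ[X]) : toLS f = aeval zLS f := by
  rw [toLS, aeval_eq_sum_range]
  refine Finset.sum_congr rfl fun j _ => ?_
  rw [Algebra.smul_def, algebraMap_laurentSeries, zLS, HahnSeries.single_pow, HahnSeries.C_apply,
    HahnSeries.single_mul_single, one_pow, mul_one, zero_add, nsmul_eq_mul, mul_neg_one]

lemma toLS_C (c : ℂ) : toLS (C c) = HahnSeries.C c := by
  rw [toLS_eq_aeval, aeval_C, algebraMap_laurentSeries]

lemma toLS_smul (c : ℂ) (f : ℂ[X]) : toLS (c • f) = HahnSeries.C c * toLS f := by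
  rw [smul_eq_C_mul, toLS_eq_aeval, toLS_eq_aeval, map_mul, aeval_C, algebraMap_laurentSeries]

lemma toLS_X_mul (f : ℂ[X]) : toLS (X * f) = zLS * toLS f := by
  rw [toLS_eq_aeval, toLS_eq_aeval, map_mul, aeval_X]

lemma zLS_mul_single_one : zLS * HahnSeries.single 1 1 = 1 := by
  rw [zLS, HahnSeries.single_mul_single, neg_add_cancel, mul_one, HahnSeries.single_zero_one]

lemma single_one_eq_C_mul (c : ℂ) :
    (HahnSeries.single 1 c : LaurentSeries ℂ) = HahnSeries.C c * HahnSeries.single 1 1 := by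
  rw [HahnSeries.C_apply, HahnSeries.single_mul_single, zero_add, mul_one]

lemma toLS_divX_of_coeff_zero {f : ℂ[X]} (hf : f.coeff 0 = 0) :
    toLS f.divX = HahnSeries.single 1 1 * toLS f := by
  conv_rhs => rw [← X_mul_divX_add f, hf, C_0, add_zero, toLS_X_mul, ← mul_assoc, mul_comm _ zLS,
    zLS_mul_single_one, one_mul]

lemma hLS_coeff (a : ℂ) (F : LaurentSeries ℂ) (k : ℤ) :
    (hLS a F).coeff k = a ^ (-k) * F.coeff k := rfl

lemma support_hLS_subset (a : ℂ) (F : LaurentSeries ℂ) : (hLS a F).support ⊆ F.support :=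
  fun k hk h => hk (by rw [hLS_coeff, h, mul_zero])

lemma hLS_add (a : ℂ) (F G : LaurentSeries ℂ) : hLS a (F + G) = hLS a F + hLS a G := by
  ext k; simp only [hLS_coeff, HahnSeries.coeff_add, mul_add]

lemma hLS_mul {a : ℂ} (ha : a ≠ 0) (F G : LaurentSeries ℂ) :
    hLS a (F * G) = hLS a F * hLS a G := by
  ext k
  rw [hLS_coeff, HahnSeries.coeff_mul, HahnSeries.coeff_mul, Finset.mul_sum]
  symm
  refine Finset.sum_subset_zero_on_sdiff
    ((Finset.antidiagonal_mono_left (support_hLS_subset a F)).trans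
      (Finset.antidiagonal_mono_right (support_hLS_subset a G))) (fun ij hij => ?_)
    (fun ij hij => ?_)
  · obtain ⟨hmem, hnot⟩ := Finset.mem_sdiff.1 hij
    rw [Finset.mem_antidiagonal] at hmem hnot
    exact absurd ⟨mul_ne_zero (zpow_ne_zero _ ha) hmem.1, mul_ne_zero (zpow_ne_zero _ ha) hmem.2.1,
      hmem.2.2⟩ hnot
  · rw [Finset.mem_antidiagonal] at hij
    rw [hLS_coeff, hLS_coeff, ← hij.2.2, neg_add, zpow_add₀ ha]
    ring

lemma hLS_single (a : ℂ) (b : ℤ) (r : ℂ) :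
    hLS a (HahnSeries.single b r) = HahnSeries.single b (a ^ (-b) * r) := by
  ext k
  rw [hLS_coeff, HahnSeries.coeff_single, HahnSeries.coeff_single]
  split_ifs with h
  · rw [h]
  · rw [mul_zero]

lemma hLS_C (a c : ℂ) : hLS a (HahnSeries.C c) = HahnSeries.C c := by
  rw [HahnSeries.C_apply, hLS_single, neg_zero, zpow_zero, one_mul]

def hLSAlgHom {a : ℂ} (ha : a ≠ 0) : LaurentSeries ℂ →ₐ[ℂ] LaurentSeries ℂ where
  toFun := hLS a
  map_one' := by rw [← HahnSeries.C_one, hLS_C]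
  map_mul' := hLS_mul ha
  map_zero' := by ext k; rw [hLS_coeff, HahnSeries.coeff_zero, mul_zero]
  map_add' := hLS_add a
  commutes' c := by rw [algebraMap_laurentSeries, hLS_C]

lemma hLSAlgHom_apply {a : ℂ} (ha : a ≠ 0) (F : LaurentSeries ℂ) : hLSAlgHom ha F = hLS a F :=
  rfl

lemma hLS_toLS {a : ℂ} (ha : a ≠ 0) (f : ℂ[X]) : hLS a (toLS f) = toLS (hP a f) := by
  have h : (hLSAlgHom ha).comp (aeval zLS) = (aeval zLS).comp (aeval (C a * X)) := by
    refine algHom_ext ?_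
    rw [AlgHom.comp_apply, AlgHom.comp_apply, aeval_X, aeval_X, map_mul, aeval_C, aeval_X,
      algebraMap_laurentSeries, hLSAlgHom_apply, zLS, hLS_single, HahnSeries.C_apply,
      HahnSeries.single_mul_single, neg_neg, zpow_one, mul_one, zero_add]
  rw [toLS_eq_aeval, toLS_eq_aeval, ← hLSAlgHom_apply ha, ← AlgHom.comp_apply, h]
  rfl

lemma hLS_ofPowerSeries (b : ℂ) (φ : PowerSeries ℂ) :
    hLS b (HahnSeries.ofPowerSeries ℤ ℂ φ) =
      HahnSeries.ofPowerSeries ℤ ℂ (PowerSeries.rescale b⁻¹ φ) := by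
  ext k
  rw [hLS_coeff, PowerSeries.coeff_coe, PowerSeries.coeff_coe]
  split_ifs with hk
  · rw [mul_zero]
  · rw [PowerSeries.coeff_rescale, inv_pow, ← zpow_natCast, Int.natAbs_of_nonneg (not_lt.1 hk),
      zpow_neg]

lemma HqLS_add (p : ℂ) (F G : LaurentSeries ℂ) : HqLS p (F + G) = HqLS p F + HqLS p G := by
  simp only [HqLS, hLS_add]; ring

lemma HqLS_mul {p : ℂ} (hp : p ≠ 0) (F G : LaurentSeries ℂ) :
    HqLS p (F * G) = hLS p F * HqLS p G + HqLS p F * G := by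
  simp only [HqLS, hLS_mul hp]; ring

lemma toLS_HqP {p : ℂ} (hp : p ≠ 0) (f : ℂ[X]) : toLS (HqP p f) = HqLS p (toLS f) := by
  have hHqP : HqP p f = (p - 1)⁻¹ • (hP p f - f).divX := by
    simp [HqP, thetaP_zero_apply]
  rw [hHqP, toLS_smul, toLS_divX_of_coeff_zero (by rw [coeff_sub, coeff_zero_hP, sub_self]),
    HqLS, single_one_eq_C_mul (p - 1)⁻¹, hLS_toLS hp, toLS_eq_aeval, toLS_eq_aeval, toLS_eq_aeval,
    map_sub, mul_assoc]

lemma apply_C_mul_X_pow (v : PForm) (c : ℂ) (n : ℕ) : v (C c * X ^ n) = c * v (X ^ n) := by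
  rw [← smul_eq_C_mul, map_smul, smul_eq_mul]

lemma kern_zero (v : PForm) : kern v 0 = C (v 1) := by
  simp [kern]

lemma kern_succ (v : PForm) (n : ℕ) : kern v (n + 1) = X * kern v n + C (v (X ^ (n + 1))) := by
  rw [kern, Finset.sum_range_succ', kern, Finset.mul_sum]
  simp only [Nat.sub_zero, pow_zero, mul_one, Nat.add_sub_add_right, pow_succ']
  congr 1
  exact Finset.sum_congr rfl fun i _ => by ring

lemma lmul_C_mul_X_pow (v : PForm) (c : ℂ) (n : ℕ) : lmul v (C c * X ^ n) = C c * kern v n := by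
  rw [C_mul_X_pow_eq_monomial, ← smul_eq_C_mul]
  exact sum_monomial_index c (fun j a => a • kern v j) (zero_smul ℂ _)

lemma lmul_X_pow (v : PForm) (n : ℕ) : lmul v (X ^ n) = kern v n := by
  simpa using lmul_C_mul_X_pow v 1 n

lemma lmul_eq_X_mul_lmul_divX_add_C (v : PForm) (f : ℂ[X]) :
    lmul v f = X * lmul v f.divX + C (v f) := by
  induction f using Polynomial.induction_on' with
  | add f g hf hg => rw [map_add, hf, hg, divX_add, map_add, map_add, C_add]; ring
  | monomial n c =>
    rw [← C_mul_X_pow_eq_monomial, lmul_C_mul_X_pow, divX_C_mul_X_pow, apply_C_mul_X_pow]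
    cases n with
    | zero => simp [kern_zero]
    | succ n =>
      rw [if_neg n.succ_ne_zero, Nat.add_sub_cancel, lmul_C_mul_X_pow, kern_succ, C_mul]
      ring

lemma divF_zero_apply (w : PForm) (f : ℂ[X]) : divF 0 w f = w f.divX := by
  rw [divF, LinearMap.comp_apply, thetaP_zero_apply]

lemma kern_divF_zero_succ (w : PForm) (n : ℕ) : kern (divF 0 w) (n + 1) = kern w n := by
  induction n with
  | zero =>
    have hX : (X : ℂ[X]).divX = 1 := by simpa using divX_X_pow (R := ℂ) (n := 1)
    simp [kern_succ, kern_zero, divF_zero_apply, hX]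
  | succ n ih => rw [kern_succ, ih, divF_zero_apply, divX_X_pow, if_neg (by omega),
      Nat.add_sub_cancel, kern_succ]

lemma lmul_divF_zero (w : PForm) (f : ℂ[X]) : lmul (divF 0 w) f = lmul w f.divX := by
  induction f using Polynomial.induction_on' with
  | add f g hf hg => rw [map_add, hf, hg, divX_add, map_add]
  | monomial n c =>
    rw [← C_mul_X_pow_eq_monomial, lmul_C_mul_X_pow, divX_C_mul_X_pow]
    cases n with
    | zero => simp [kern_zero, divF_zero_apply]
    | succ n => rw [if_neg n.succ_ne_zero, Nat.add_sub_cancel, lmul_C_mul_X_pow,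
        kern_divF_zero_succ]

lemma mF_apply (f : ℂ[X]) (v : PForm) (g : ℂ[X]) : mF f v g = v (f * g) := rfl

lemma mF_X_mul (f : ℂ[X]) (v : PForm) : mF (X * f) v = mF X (mF f v) := by
  refine LinearMap.ext fun g => ?_
  simp only [mF_apply, mul_assoc, mul_left_comm]

lemma mF_add (f g : ℂ[X]) (v : PForm) : mF (f + g) v = mF f v + mF g v := by
  refine LinearMap.ext fun h => ?_
  simp only [mF_apply, add_mul, map_add, LinearMap.add_apply]

lemma mF_C (c : ℂ) (v : PForm) : mF (C c) v = c • v := by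
  refine LinearMap.ext fun h => ?_
  simp only [mF_apply, ← smul_eq_C_mul, map_smul, LinearMap.smul_apply]

lemma HqF_eq_smul_sub (q : ℂ) (v : PForm) :
    HqF q v = (1 - q)⁻¹ • (hF q (divF 0 v) - divF 0 v) := by
  refine LinearMap.ext fun f => ?_
  simp only [HqF, HqP, hF, divF, LinearMap.neg_apply, LinearMap.comp_apply, LinearMap.smul_apply,
    LinearMap.sub_apply, LinearMap.id_apply, map_smul, map_sub, smul_eq_mul]
  rw [← neg_mul, neg_inv, neg_sub]

def moments : PForm →ₗ[ℂ] PowerSeries ℂ where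
  toFun v := PowerSeries.mk fun n => v (X ^ n)
  map_add' v w := by ext; simp
  map_smul' c v := by ext; simp

lemma coeff_moments (v : PForm) (n : ℕ) : PowerSeries.coeff n (moments v) = v (X ^ n) :=
  PowerSeries.coeff_mk n fun n => v (X ^ n)

lemma moments_injective : Function.Injective moments := fun v w h =>
  lhom_ext' fun n => LinearMap.ext_ring <| by
    simpa [coeff_moments, X_pow_eq_monomial] using congrArg (PowerSeries.coeff n) h

lemma moments_hF (a : ℂ) (v : PForm) : moments (hF a v) = PowerSeries.rescale a (moments v) := by
  ext n
  rw [coeff_moments, PowerSeries.coeff_rescale, coeff_moments, hF, LinearMap.comp_apply, hP_X_pow,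
    map_smul, smul_eq_mul]

lemma moments_divF_zero (w : PForm) : moments (divF 0 w) = PowerSeries.X * moments w := by
  ext (_ | n) <;> simp [coeff_moments, divF_zero_apply, divX_X_pow, PowerSeries.coeff_succ_X_mul]

lemma moments_cF (u v : PForm) : moments (cF u v) = moments u * moments v := by
  ext n
  rw [coeff_moments, PowerSeries.coeff_mul, Finset.Nat.sum_antidiagonal_eq_sum_range_succ_mk, cF,
    LinearMap.comp_apply, lmul_X_pow, kern, map_sum]
  refine Finset.sum_congr rfl fun i _ => ?_
  rw [← smul_eq_C_mul, map_smul, smul_eq_mul, coeff_moments, coeff_moments, mul_comm]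

lemma X_mul_moments_mF_X_add_C (v : PForm) :
    PowerSeries.X * moments (mF X v) + PowerSeries.C (v 1) = moments v := by
  ext (_ | n) <;> simp [coeff_moments, mF, PowerSeries.coeff_succ_X_mul, pow_succ']

lemma Sf_eq_neg_ofPowerSeries (v : PForm) :
    Sf v = -HahnSeries.ofPowerSeries ℤ ℂ (PowerSeries.X * moments v) := by
  rw [Sf, ← map_neg]
  congr 1
  ext (_ | n) <;> simp [coeff_moments, PowerSeries.coeff_succ_X_mul]

lemma Sf_add (v w : PForm) : Sf (v + w) = Sf v + Sf w := by
  simp only [Sf_eq_neg_ofPowerSeries, map_add, mul_add, neg_add]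

lemma Sf_sub (v w : PForm) : Sf (v - w) = Sf v - Sf w := by
  simp only [Sf_eq_neg_ofPowerSeries, map_sub, mul_sub]
  abel

lemma Sf_smul (c : ℂ) (v : PForm) : Sf (c • v) = HahnSeries.C c * Sf v := by
  rw [Sf_eq_neg_ofPowerSeries, Sf_eq_neg_ofPowerSeries, map_smul, PowerSeries.smul_eq_C_mul,
    mul_left_comm, map_mul, HahnSeries.ofPowerSeries_C, mul_neg]

lemma Sf_eq_zero_iff (v : PForm) : Sf v = 0 ↔ v = 0 := by
  rw [Sf_eq_neg_ofPowerSeries, neg_eq_zero, map_eq_zero_iff _ HahnSeries.ofPowerSeries_injective,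
    mul_eq_zero, or_iff_right PowerSeries.X_ne_zero, map_eq_zero_iff _ moments_injective]

lemma Sf_hF {a : ℂ} (ha : a ≠ 0) (v : PForm) :
    Sf (hF a v) = HahnSeries.C a⁻¹ * hLS a⁻¹ (Sf v) := by
  rw [Sf_eq_neg_ofPowerSeries, Sf_eq_neg_ofPowerSeries, moments_hF,
    ← hLSAlgHom_apply (inv_ne_zero ha), map_neg, hLSAlgHom_apply, hLS_ofPowerSeries, inv_inv,
    map_mul (PowerSeries.rescale a), PowerSeries.rescale_X]
  simp only [map_mul, HahnSeries.ofPowerSeries_C]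
  linear_combination (HahnSeries.ofPowerSeries ℤ ℂ PowerSeries.X *
    HahnSeries.ofPowerSeries ℤ ℂ (PowerSeries.rescale a (moments v))) * C_inv_mul_C ha

lemma Sf_divF_zero (w : PForm) : Sf (divF 0 w) = HahnSeries.single 1 1 * Sf w := by
  simp only [Sf_eq_neg_ofPowerSeries, moments_divF_zero, map_mul, HahnSeries.ofPowerSeries_X]
  ring

lemma Sf_cF (u v : PForm) : Sf (cF u v) = -(zLS * (Sf u * Sf v)) := by
  simp only [Sf_eq_neg_ofPowerSeries, moments_cF, map_mul, HahnSeries.ofPowerSeries_X]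
  linear_combination (HahnSeries.single 1 1 * HahnSeries.ofPowerSeries ℤ ℂ (moments u) *
    HahnSeries.ofPowerSeries ℤ ℂ (moments v)) * zLS_mul_single_one

lemma Sf_mF_X (v : PForm) : Sf (mF X v) = zLS * Sf v + HahnSeries.C (v 1) := by
  have h := congrArg (HahnSeries.ofPowerSeries ℤ ℂ) (X_mul_moments_mF_X_add_C v)
  rw [map_add, HahnSeries.ofPowerSeries_C] at h
  simp only [Sf_eq_neg_ofPowerSeries, map_mul, HahnSeries.ofPowerSeries_X] at h ⊢
  linear_combination (-1 : LaurentSeries ℂ) * h +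
    HahnSeries.ofPowerSeries ℤ ℂ (moments v) * zLS_mul_single_one

lemma Sf_mF_X_mul {f : ℂ[X]} {v : PForm}
    (hf : Sf (mF f v) = toLS f * Sf v + toLS (lmul v f.divX)) :
    Sf (mF (X * f) v) = toLS (X * f) * Sf v + toLS (lmul v (X * f).divX) := by
  rw [mF_X_mul, Sf_mF_X, hf, divX_X_mul, lmul_eq_X_mul_lmul_divX_add_C v f, mF_apply, mul_one]
  simp only [toLS_eq_aeval, map_add, map_mul, aeval_X, aeval_C, algebraMap_laurentSeries]
  ring

lemma Sf_mF (f : ℂ[X]) (v : PForm) : Sf (mF f v) = toLS f * Sf v + toLS (lmul v f.divX) := by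
  induction f using Polynomial.induction_on with
  | C c => rw [mF_C, Sf_smul, toLS_C, divX_C, map_zero, toLS_eq_aeval, map_zero, add_zero]
  | add f g hf hg =>
    rw [mF_add, Sf_add, hf, hg, divX_add, map_add]
    simp only [toLS_eq_aeval, map_add]
    ring
  | monomial n c ih =>
    rw [pow_succ', mul_left_comm]
    exact Sf_mF_X_mul ih

lemma Sf_HqF {q : ℂ} (hq0 : q ≠ 0) (v : PForm) :
    Sf (HqF q v) = HahnSeries.C q⁻¹ * HqLS q⁻¹ (Sf v) := by
  have hscalar : HahnSeries.C (1 - q)⁻¹ =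
      (HahnSeries.C q⁻¹ * HahnSeries.C (q⁻¹ - 1)⁻¹ : LaurentSeries ℂ) := by
    rw [← map_mul, ← mul_inv, mul_sub, mul_inv_cancel₀ hq0, mul_one]
  rw [HqF_eq_smul_sub, Sf_smul, Sf_sub, Sf_hF hq0, Sf_divF_zero,
    ← hLSAlgHom_apply (inv_ne_zero hq0), map_mul, hLSAlgHom_apply, hLSAlgHom_apply, hLS_single,
    zpow_neg_one, inv_inv, mul_one, HqLS, single_one_eq_C_mul q, single_one_eq_C_mul (q⁻¹ - 1)⁻¹]
  set T : LaurentSeries ℂ := HahnSeries.single 1 1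
  set S := Sf v
  linear_combination (HahnSeries.C q⁻¹ * HahnSeries.C q * T * hLS q⁻¹ S - T * S) * hscalar +
    HahnSeries.C q⁻¹ * HahnSeries.C (q⁻¹ - 1)⁻¹ * T * hLS q⁻¹ S * C_inv_mul_C hq0

lemma Sf_LHeq_lhs {q : ℂ} (hq0 : q ≠ 0) (u : PForm) (Φ Ψ B : ℂ[X]) :
    Sf (HqF q (mF Φ u) + mF Ψ u + mF B (divF 0 (cF u (hF q u)))) =
      HahnSeries.C q⁻¹ * (toLS (hP q⁻¹ Φ) * HqLS q⁻¹ (Sf u) -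
        (toLS B * Sf u * hLS q⁻¹ (Sf u) + toLS (-(HqP q⁻¹ Φ) - q • Ψ) * Sf u +
          toLS (-(HqP q⁻¹ (lmul u (thetaP 0 Φ)) + q • lmul u (thetaP 0 Ψ)
            + q • lmul (cF u (hF q u)) (thetaP 0 (thetaP 0 B)))))) := by
  rw [Sf_add, Sf_add, Sf_HqF hq0, Sf_mF, Sf_mF, Sf_mF, Sf_divF_zero, Sf_cF, Sf_hF hq0,
    lmul_divF_zero, HqLS_add, HqLS_mul (inv_ne_zero hq0), hLS_toLS (inv_ne_zero hq0),
    ← toLS_HqP (inv_ne_zero hq0), ← toLS_HqP (inv_ne_zero hq0)]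
  simp only [thetaP_zero_apply, smul_eq_C_mul, toLS_eq_aeval, map_add, map_sub, map_neg, map_mul,
    aeval_C, algebraMap_laurentSeries]
  set S := Sf u
  set W := cF u (hF q u)
  linear_combination (-(aeval zLS Ψ * S + aeval zLS (lmul u Ψ.divX) +
      aeval zLS (lmul W B.divX.divX))) * C_inv_mul_C hq0 -
    HahnSeries.C q⁻¹ * aeval zLS B * S * hLS q⁻¹ S * zLS_mul_single_one

theorem riccati_characterization_general (q : ℂ) (hq0 : q ≠ 0)
    (u : PForm)
    (Φ Ψ B Cp Dp : Polynomial ℂ)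
    (hC : Cp = -(HqP q⁻¹ Φ) - q • Ψ)
    (hD : Dp = -(HqP q⁻¹ (lmul u (thetaP 0 Φ)) + q • lmul u (thetaP 0 Ψ)
        + q • lmul (cF u (hF q u)) (thetaP 0 (thetaP 0 B)))) :
    LHeq q u Φ Ψ B ↔
      toLS (hP q⁻¹ Φ) * HqLS q⁻¹ (Sf u)
        = toLS B * Sf u * hLS q⁻¹ (Sf u) + toLS Cp * Sf u + toLS Dp := by
  rw [LHeq, ← Sf_eq_zero_iff, Sf_LHeq_lhs hq0, ← hC, ← hD, mul_eq_zero,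
    or_iff_right (HahnSeries.C_ne_zero (inv_ne_zero hq0)), sub_eq_zero]

/-- Proposition 6: `u` satisfies the q-difference equation iff
`S(u)` satisfies the corresponding q-Riccati equation. -/
theorem riccati_characterization (q : ℂ) (hq0 : q ≠ 0) (hq : ∀ n : ℕ, 1 ≤ n → q ^ n ≠ 1)
    (u : PForm) (hreg : IsRegular u)
    (Φ Ψ B Cp Dp : Polynomial ℂ) (hΦ : Φ.Monic)
    (hC : Cp = -(HqP q⁻¹ Φ) - q • Ψ)
    (hD : Dp = -(HqP q⁻¹ (lmul u (thetaP 0 Φ)) + q • lmul u (thetaP 0 Ψ)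
        + q • lmul (cF u (hF q u)) (thetaP 0 (thetaP 0 B)))) :
    LHeq q u Φ Ψ B ↔
      toLS (hP q⁻¹ Φ) * HqLS q⁻¹ (Sf u)
        = toLS B * Sf u * hLS q⁻¹ (Sf u) + toLS Cp * Sf u + toLS Dp :=
  riccati_characterization_general q hq0 u Φ Ψ B Cp Dp hC hD

end QLH

end
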